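/- arXiv:2010.03440 — 8 statements merged into one kernel-verified Lean document; each statement's English description precedes it below -/
import Mathlib

section
/- Let p be prime and n ≥ 1. If 1 ≤ k ≤ s_p(n), then there exist positive integers j_1,...,j_k with j_1+...+j_k = n and s_p(j_1)+...+s_p(j_k) = s_p(n). -/
/-- base-p digit sum -/
def sp (p n : ℕ) : ℕ := (Nat.digits p n).sum

/-!
Write `n = p ^ v * u` with `p ∤ u`. Subtracting `p ^ v` only lowers the last nonzero digit of `n`
by one, so `n = p ^ v + m` with `s_p(m) = s_p(n) - 1` and `s_p(p ^ v) = 1`. Iterating this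
splits off `k - 1` powers of `p`, each carrying one unit of digit sum, and the remainder keeps
the rest.
-/

section DigitSum

variable {p : ℕ}

@[simp]
theorem sp_zero : sp p 0 = 0 := by
  simp [sp]

theorem ne_zero_of_sp_pos {n : ℕ} (h : 0 < sp p n) : n ≠ 0 := by
  rintro rfl
  simp at h

theorem sp_add_mul_base (hp : 1 < p) {x : ℕ} (hx : x < p) (y : ℕ) :
    sp p (x + p * y) = x + sp p y := by
  rcases eq_or_ne x 0 with rfl | hx0
  · rcases eq_or_ne y 0 with rfl | hy0
    · simp
    · rw [sp, Nat.digits_add p hp 0 y hx (Or.inr hy0), List.sum_cons, sp]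
  · rw [sp, Nat.digits_add p hp x y hx (Or.inl hx0), List.sum_cons, sp]

theorem sp_base_pow_mul (hp : 1 < p) (v y : ℕ) : sp p (p ^ v * y) = sp p y := by
  induction v with
  | zero => simp
  | succ v ih =>
    have := sp_add_mul_base hp (Nat.zero_lt_of_lt hp) (p ^ v * y)
    rwa [zero_add, zero_add, ← mul_assoc, ← pow_succ', ih] at this

theorem sp_base_pow (hp : 1 < p) (v : ℕ) : sp p (p ^ v) = 1 := by
  have h1 : sp p 1 = 1 := by simpa using sp_add_mul_base hp hp 0
  simpa [h1] using sp_base_pow_mul hp v 1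

theorem sp_eq_sp_sub_one_add_one (hp : 1 < p) {u : ℕ} (hu : ¬p ∣ u) :
    sp p u = sp p (u - 1) + 1 := by
  have hr : 0 < u % p := Nat.pos_of_ne_zero fun h => hu (Nat.dvd_of_mod_eq_zero h)
  have hrp : u % p < p := Nat.mod_lt u (by omega)
  have hu_pred : u - 1 = (u % p - 1) + p * (u / p) := by
    have := Nat.mod_add_div u p
    omega
  conv_lhs => rw [← Nat.mod_add_div u p]
  rw [hu_pred, sp_add_mul_base hp hrp, sp_add_mul_base hp (by omega)]
  omega

theorem exists_eq_base_pow_add_sp_succ (hp : 1 < p) {n : ℕ} (hn : n ≠ 0) :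
    ∃ v m, n = p ^ v + m ∧ sp p n = sp p m + 1 := by
  obtain ⟨v, u, hu, rfl⟩ := Nat.exists_eq_pow_mul_and_not_dvd hn p hp.ne'
  have hu0 : u ≠ 0 := by rintro rfl; exact hu (dvd_zero p)
  refine ⟨v, p ^ v * (u - 1), ?_, ?_⟩
  · nth_rw 1 [← Nat.sub_add_cancel (Nat.one_le_iff_ne_zero.2 hu0)]
    ring
  · rw [sp_base_pow_mul hp, sp_base_pow_mul hp, sp_eq_sp_sub_one_add_one hp hu]

end DigitSum

theorem exists_composition_sp_eq {p : ℕ} (hp : 1 < p) {n k : ℕ} (hk1 : 1 ≤ k)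
    (hk2 : k ≤ sp p n) :
    ∃ j : Fin k → ℕ, (∀ i, 1 ≤ j i) ∧ (∑ i, j i = n) ∧ (∑ i, sp p (j i) = sp p n) := by
  induction k, hk1 using Nat.le_induction generalizing n with
  | base =>
    exact ⟨fun _ => n, fun _ => Nat.one_le_iff_ne_zero.2 (ne_zero_of_sp_pos hk2), by simp,
      by simp⟩
  | succ k hk ih =>
    obtain ⟨v, m, rfl, hsp⟩ := exists_eq_base_pow_add_sp_succ hp
      (ne_zero_of_sp_pos ((Nat.succ_pos k).trans_le hk2))
    obtain ⟨j, hj_pos, hj_sum, hj_sp⟩ := ih (n := m) (by omega)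
    refine ⟨Fin.cons (p ^ v) j, Fin.cases (Nat.one_le_pow _ _ (by omega)) hj_pos, ?_, ?_⟩
    · rw [Fin.sum_cons, hj_sum]
    · simp only [Fin.sum_univ_succ, Fin.cons_zero, Fin.cons_succ]
      rw [hj_sp, sp_base_pow hp, hsp, add_comm]

theorem exists_composition_digitSum_eq_general (p : ℕ) (hp : p.Prime) (n k : ℕ)
    (hk1 : 1 ≤ k) (hk2 : k ≤ sp p n) :
    ∃ j : Fin k → ℕ, (∀ i, 1 ≤ j i) ∧ (∑ i, j i = n) ∧
      (∑ i, sp p (j i) = sp p n) :=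
  exists_composition_sp_eq hp.one_lt hk1 hk2

theorem exists_composition_digitSum_eq (p : ℕ) (hp : p.Prime) (n k : ℕ)
    (hn : 1 ≤ n) (hk1 : 1 ≤ k) (hk2 : k ≤ sp p n) :
    ∃ j : Fin k → ℕ, (∀ i, 1 ≤ j i) ∧ (∑ i, j i = n) ∧
      (∑ i, sp p (j i) = sp p n) :=
  exists_composition_digitSum_eq_general p hp n k hk1 hk2
end

section
/- Let p be prime, n ≥ 1, and let l = max{t : p^t ≤ s_p(n)}. Suppose k = p^{l+m}·x with m ≥ 1 and x ≥ 1, and k > s_p(n). Then for all positive integers j_1,...,j_k with j_1+...+j_k = n, we have (s_p(j_1)+...+s_p(j_k) - s_p(n))/(p-1) ≥ m. -/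
lemma sp_pos (p a : ℕ) (ha : 1 ≤ a) : 1 ≤ sp p a := by
  have hne : Nat.digits p a ≠ [] := Nat.digits_ne_nil_iff_ne_zero.mpr (by omega)
  have hmem : (Nat.digits p a).getLast hne ∈ Nat.digits p a := List.getLast_mem hne
  have hz := Nat.getLast_digit_ne_zero p (show a ≠ 0 by omega)
  have := List.single_le_sum (fun x (_ : x ∈ Nat.digits p a) => Nat.zero_le x) _ hmem
  unfold sp
  omega

lemma sp_modeq (p : ℕ) (hp : 2 ≤ p) (a : ℕ) :
    ((p : ℤ) - 1) ∣ (a : ℤ) - (sp p a : ℤ) := by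
  rcases eq_or_lt_of_le hp with h2 | h3
  · simp [← h2]
  · have h : p % (p - 1) = 1 := by
      rw [Nat.mod_eq_sub_mod (by omega)]
      have he : p - (p - 1) = 1 := by omega
      rw [he, Nat.mod_eq_of_lt (by omega)]
    have hme := Nat.modEq_digits_sum (p - 1) p h a
    have hd := hme.symm.dvd
    have hc : ((p - 1 : ℕ) : ℤ) = (p : ℤ) - 1 := by
      rw [Nat.cast_sub (by omega)]; norm_num
    rw [hc] at hd
    exact hd

lemma pow_ge_bernoulli' (d t : ℕ) : 1 + t * d ≤ (d + 1) ^ t := by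
  induction t with
  | zero => simp
  | succ t ih =>
    have h1 : 1 ≤ (d + 1) ^ t := Nat.one_le_pow _ _ (by omega)
    have h2 : (d + 1) ^ (t + 1) = (d + 1) ^ t * d + (d + 1) ^ t := by ring
    nlinarith

lemma pow_ge_bernoulli (p t : ℕ) (hp : 1 ≤ p) : 1 + t * (p - 1) ≤ p ^ t := by
  obtain ⟨d, rfl⟩ : ∃ d, p = d + 1 := ⟨p - 1, by omega⟩
  simpa using pow_ge_bernoulli' d t

theorem digitSum_excess_lower_bound (p : ℕ) (hp : p.Prime) (n : ℕ) (hn : 1 ≤ n)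
    (l m x k : ℕ) (hl : l = Nat.log p (sp p n))
    (hm : 1 ≤ m) (hx : 1 ≤ x) (hk : k = p ^ (l + m) * x) (hks : sp p n < k)
    (j : Fin k → ℕ) (hpos : ∀ i, 1 ≤ j i) (hsum : ∑ i, j i = n) :
    (m : ℤ) * ((p : ℤ) - 1) ≤ (∑ i, (sp p (j i) : ℤ)) - (sp p n : ℤ) := by
  have hp2 : 2 ≤ p := hp.two_le
  set S : ℤ := ∑ i, (sp p (j i) : ℤ) with hS
  -- divisibility of the excess
  have hdvd : ((p : ℤ) - 1) ∣ S - (sp p n : ℤ) := by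
    have h1 : ((p : ℤ) - 1) ∣ ∑ i, ((j i : ℤ) - (sp p (j i) : ℤ)) :=
      Finset.dvd_sum fun i _ => sp_modeq p hp2 (j i)
    have h2 : ((p : ℤ) - 1) ∣ (n : ℤ) - (sp p n : ℤ) := sp_modeq p hp2 n
    have h3 : (∑ i, ((j i : ℤ) - (sp p (j i) : ℤ))) = (n : ℤ) - S := by
      rw [Finset.sum_sub_distrib, hS, ← hsum]
      push_cast
      ring
    have := dvd_sub h2 (h3 ▸ h1)
    simpa using this
  -- lower bound S ≥ k
  have hSk : (k : ℤ) ≤ S := by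
    have : ∀ i ∈ (Finset.univ : Finset (Fin k)), (1 : ℤ) ≤ (sp p (j i) : ℤ) := by
      intro i _
      exact_mod_cast sp_pos p (j i) (hpos i)
    calc (k : ℤ) = ∑ _i : Fin k, (1 : ℤ) := by simp
    _ ≤ S := Finset.sum_le_sum this
  -- sp n < p ^ (l+1)
  have hsn : sp p n < p ^ (l + 1) := by
    rw [hl]
    exact Nat.lt_pow_succ_log_self hp2 _
  -- k ≥ p^(l+m)
  have hkge : p ^ (l + m) ≤ k := by
    rw [hk]
    exact Nat.le_mul_of_pos_right _ (by omega)
  -- key: p^(l+m) ≥ p^(l+1) + (m-1)*(p-1)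
  have hkey : p ^ (l + 1) + (m - 1) * (p - 1) ≤ p ^ (l + m) := by
    have hb := pow_ge_bernoulli p (m - 1) (by omega)
    have hpl : 1 ≤ p ^ (l + 1) := Nat.one_le_pow _ _ (by omega)
    have hsplit : p ^ (l + m) = p ^ (l + 1) * p ^ (m - 1) := by
      rw [← pow_add]
      congr 1
      omega
    rw [hsplit]
    calc p ^ (l + 1) + (m - 1) * (p - 1)
        ≤ p ^ (l + 1) + p ^ (l + 1) * ((m - 1) * (p - 1)) :=
          Nat.add_le_add_left (Nat.le_mul_of_pos_left _ (by omega)) _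
    _ = p ^ (l + 1) * (1 + (m - 1) * (p - 1)) := by ring
    _ ≤ p ^ (l + 1) * p ^ (m - 1) := Nat.mul_le_mul_left _ hb
  -- D > (m-1)(p-1)
  have hD : ((m : ℤ) - 1) * ((p : ℤ) - 1) < S - (sp p n : ℤ) := by
    have h1 : (sp p n : ℤ) < (p : ℤ) ^ (l + 1) := by exact_mod_cast hsn
    have h2 : ((p : ℤ) ^ (l + 1) + ((m : ℤ) - 1) * ((p : ℤ) - 1)) ≤ (p : ℤ) ^ (l + m) := by
      have h := hkey
      zify [show 1 ≤ m from hm, show 1 ≤ p by omega] at h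
      exact h
    have h3 : ((p : ℤ) ^ (l + m)) ≤ (k : ℤ) := by exact_mod_cast hkge
    linarith
  -- conclude via divisibility
  obtain ⟨q, hq⟩ := hdvd
  rw [hq] at hD ⊢
  have hp1 : (0 : ℤ) < (p : ℤ) - 1 := by
    have : (2 : ℤ) ≤ (p : ℤ) := by exact_mod_cast hp2
    linarith
  have hqm : (m : ℤ) ≤ q := by
    by_contra hq'
    push_neg at hq'
    have : q ≤ (m : ℤ) - 1 := by omega
    nlinarith
  nlinarith
end

section
/- Let p be prime, n ≥ 1, l = max{t : p^t ≤ s_p(n)}, and for 1 ≤ k ≤ n set h_p(n,k) = (1/(p-1)) · min{ s_p(j_1)+...+s_p(j_k) - s_p(n) : j_i ≥ 1, j_1+...+j_k = n }. Then max_{1 ≤ k ≤ n} ( v_p(k) - h_p(n,k) ) = l. -/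
/-- `h_p(n,k) = (1/(p-1)) · min { sₚ(j₁)+⋯+sₚ(jₖ) - sₚ(n) }` over compositions of `n`
into `k` positive parts. -/
noncomputable def hp (p n k : ℕ) : ℤ :=
  sInf {z : ℤ | ∃ j : Fin k → ℕ, (∀ i, 1 ≤ j i) ∧ (∑ i, j i = n) ∧
    z = ((∑ i, (sp p (j i) : ℤ)) - (sp p n : ℤ)) / ((p : ℤ) - 1)}

/-!
Digit sums are subadditive with defect a multiple of `p - 1` (Kummer), so `h_p(n,k)` is a
natural number `c` with `k ≤ s_p(n) + (p - 1) c`. For `v = v_p(k)` this gives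
`p^v ≤ k < p^(l+1) + (p - 1) c ≤ p^(l+1) (1 + (p - 1) c) ≤ p^(l+1+c)` by Bernoulli, so
`v - c ≤ l`. Conversely, peeling off lowest digits splits `n` into any number `k ≤ s_p(n)` of
parts whose digit sums add up to `s_p(n)`; for `k = p^l` this gives `h_p(n, p^l) = 0`.
-/

section DigitSum

variable {p : ℕ}

lemma sp_one (hp1 : 1 < p) : sp p 1 = 1 := by
  simp [sp, Nat.digits_of_lt p 1 one_ne_zero hp1]

lemma sp_pos_s7 {n : ℕ} (hn : 0 < n) : 0 < sp p n := by
  have hne : Nat.digits p n ≠ [] := Nat.digits_ne_nil_iff_ne_zero.mpr hn.ne'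
  exact (Nat.pos_of_ne_zero (Nat.getLast_digit_ne_zero p hn.ne')).trans_le
    (List.le_sum_of_mem (List.getLast_mem hne))

lemma sp_pow_mul (hp1 : 1 < p) (e m : ℕ) : sp p (p ^ e * m) = sp p m := by
  rcases m.eq_zero_or_pos with rfl | hm
  · simp [sp]
  · simp [sp, Nat.digits_base_pow_mul hp1 hm]

lemma sp_add_sp (hprime : p.Prime) (a b : ℕ) :
    sp p a + sp p b = sp p (a + b) + (p - 1) * padicValNat p ((a + b).choose b) := by
  have := Fact.mk hprime
  have legendre (m : ℕ) : sp p m + (p - 1) * padicValNat p m.factorial = m := by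
    rw [sub_one_mul_padicValNat_factorial, sp]
    exact Nat.add_sub_cancel' (Nat.digit_sum_le p m)
  have hfac : padicValNat p (a + b).factorial = padicValNat p ((a + b).choose b)
      + padicValNat p a.factorial + padicValNat p b.factorial := by
    have hC : (a + b).choose b ≠ 0 := (Nat.choose_pos (Nat.le_add_left b a)).ne'
    rw [← Nat.add_choose_mul_factorial_mul_factorial,
      padicValNat.mul (mul_ne_zero hC a.factorial_ne_zero) b.factorial_ne_zero,
      padicValNat.mul hC a.factorial_ne_zero]
  have ha := legendre a
  have hb := legendre b
  have hab := legendre (a + b)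
  rw [hfac, mul_add, mul_add] at hab
  omega

lemma exists_sum_sp_eq (hprime : p.Prime) {ι : Type*} (s : Finset ι) (f : ι → ℕ) :
    ∃ c : ℕ, ∑ i ∈ s, sp p (f i) = sp p (∑ i ∈ s, f i) + (p - 1) * c := by
  induction s using Finset.cons_induction with
  | empty => exact ⟨0, by simp [sp]⟩
  | cons a s ha ih =>
    obtain ⟨c, hc⟩ := ih
    refine ⟨c + padicValNat p ((f a + ∑ i ∈ s, f i).choose (∑ i ∈ s, f i)), ?_⟩
    rw [Finset.sum_cons, Finset.sum_cons, hc, ← add_assoc, sp_add_sp hprime]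
    ring

lemma sp_sub_one_add_one (hprime : p.Prime) {m : ℕ} (hm : 0 < m) (hpm : ¬ p ∣ m) :
    sp p (m - 1) + 1 = sp p m := by
  have h := sp_add_sp hprime (m - 1) 1
  rw [Nat.sub_add_cancel hm, Nat.choose_one_right, padicValNat.eq_zero_of_not_dvd hpm,
    sp_one hprime.one_lt] at h
  omega

/-- Removing the lowest nonzero digit `p^e` of `n` lowers the digit sum by one. -/
lemma exists_pow_le_sp_sub_pow (hprime : p.Prime) {n : ℕ} (hn : 0 < n) :
    ∃ e, p ^ e ≤ n ∧ sp p (n - p ^ e) + 1 = sp p n := by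
  obtain ⟨e, m, hpm, rfl⟩ := Nat.exists_eq_pow_mul_and_not_dvd hn.ne' p hprime.ne_one
  have hm : 0 < m := Nat.pos_of_mul_pos_left hn
  refine ⟨e, Nat.le_mul_of_pos_right _ hm, ?_⟩
  rw [← Nat.mul_sub_one, sp_pow_mul hprime.one_lt, sp_pow_mul hprime.one_lt]
  exact sp_sub_one_add_one hprime hm hpm

end DigitSum

lemma exists_composition_sum_sp_eq {p : ℕ} (hprime : p.Prime) {k : ℕ} (hk : 1 ≤ k) :
    ∀ {n : ℕ}, k ≤ sp p n →
      ∃ j : Fin k → ℕ, (∀ i, 1 ≤ j i) ∧ ∑ i, j i = n ∧ ∑ i, sp p (j i) = sp p n := by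
  induction k, hk using Nat.le_induction with
  | base =>
    intro n hn
    have hn0 : 0 < n := Nat.pos_of_ne_zero (by rintro rfl; simp [sp] at hn)
    exact ⟨fun _ => n, fun _ => hn0, by simp, by simp⟩
  | succ k hk ih =>
    intro n hkn
    have hn0 : 0 < n := Nat.pos_of_ne_zero (by rintro rfl; simp [sp] at hkn)
    obtain ⟨e, hen, hsp⟩ := exists_pow_le_sp_sub_pow hprime hn0
    obtain ⟨j, hj1, hjsum, hjsp⟩ := ih (n := n - p ^ e) (by omega)
    have hpow : sp p (p ^ e) = 1 := by
      simpa [sp_one hprime.one_lt] using sp_pow_mul hprime.one_lt e 1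
    refine ⟨Fin.cons (p ^ e) j, Fin.cases (Nat.one_le_pow _ _ hprime.pos) hj1, ?_, ?_⟩
    · rw [Fin.sum_cons, hjsum]
      omega
    · rw [Fin.sum_univ_succ]
      simp only [Fin.cons_zero, Fin.cons_succ]
      omega

lemma le_log_add_of_pow_le {p v s c : ℕ} (hp1 : 1 < p) (h : p ^ v ≤ s + (p - 1) * c) :
    v ≤ Nat.log p s + c := by
  set L := Nat.log p s + 1
  have hs : s < p ^ L := Nat.lt_pow_succ_log_self hp1 s
  have hL : 1 ≤ p ^ L := Nat.one_le_pow _ _ (by omega)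
  have bernoulli : 1 + c * (p - 1) ≤ p ^ c := by
    simpa [Nat.add_sub_cancel' hp1.le] using
      one_add_mul_le_pow_of_sq_nonneg (a := p - 1) (by positivity) (by positivity)
        (by positivity) c
  have : p ^ v < p ^ (L + c) :=
    calc p ^ v ≤ s + (p - 1) * c := h
      _ < p ^ L + (p - 1) * c := by omega
      _ ≤ p ^ L * (1 + c * (p - 1)) := by nlinarith [Nat.mul_le_mul_right (c * (p - 1)) hL]
      _ ≤ p ^ L * p ^ c := Nat.mul_le_mul_left _ bernoulli
      _ = p ^ (L + c) := (pow_add p L c).symm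
  have := (Nat.pow_lt_pow_iff_right (by omega)).mp this
  omega

section HpValues

variable {p n k : ℕ}

def hpValues (p n k : ℕ) : Set ℤ :=
  {z : ℤ | ∃ j : Fin k → ℕ, (∀ i, 1 ≤ j i) ∧ (∑ i, j i = n) ∧
    z = ((∑ i, (sp p (j i) : ℤ)) - (sp p n : ℤ)) / ((p : ℤ) - 1)}

lemma exists_natCast_of_mem_hpValues (hprime : p.Prime) {z : ℤ} (hz : z ∈ hpValues p n k) :
    ∃ c : ℕ, z = c ∧ k ≤ sp p n + (p - 1) * c := by
  obtain ⟨j, hj1, rfl, rfl⟩ := hz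
  obtain ⟨c, hc⟩ := exists_sum_sp_eq hprime Finset.univ j
  refine ⟨c, ?_, ?_⟩
  · zify [hprime.one_lt.le] at hc
    rw [hc, add_sub_cancel_left, Int.mul_ediv_cancel_left _ (by have := hprime.two_le; omega)]
  · have : ∑ _i : Fin k, 1 ≤ ∑ i, sp p (j i) := Finset.sum_le_sum fun i _ => sp_pos_s7 (hj1 i)
    simp only [Finset.sum_const, Finset.card_univ, Fintype.card_fin, smul_eq_mul, mul_one]
      at this
    omega

lemma nonneg_of_mem_hpValues (hprime : p.Prime) {z : ℤ} (hz : z ∈ hpValues p n k) : 0 ≤ z := by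
  obtain ⟨c, rfl, -⟩ := exists_natCast_of_mem_hpValues hprime hz
  positivity

lemma hpValues_nonempty (hk1 : 1 ≤ k) (hkn : k ≤ n) : (hpValues p n k).Nonempty := by
  obtain ⟨k, rfl⟩ : ∃ k', k = k' + 1 := ⟨k - 1, by omega⟩
  refine ⟨_, Fin.cons (n - k) (fun _ => 1), Fin.cases (show 1 ≤ n - k by omega) fun _ => le_rfl,
    ?_, rfl⟩
  simp only [Fin.sum_cons, Finset.sum_const, Finset.card_univ, Fintype.card_fin, smul_eq_mul,
    mul_one]
  omega

lemma exists_hp_eq_natCast (hprime : p.Prime) (hk1 : 1 ≤ k) (hkn : k ≤ n) :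
    ∃ c : ℕ, hp p n k = c ∧ k ≤ sp p n + (p - 1) * c :=
  exists_natCast_of_mem_hpValues hprime <| Int.csInf_mem (hpValues_nonempty hk1 hkn)
    ⟨0, fun _ => nonneg_of_mem_hpValues hprime⟩

lemma hp_eq_zero_of_le_sp (hprime : p.Prime) (hk1 : 1 ≤ k) (hks : k ≤ sp p n) :
    hp p n k = 0 := by
  obtain ⟨j, hj1, hjsum, hjsp⟩ := exists_composition_sum_sp_eq hprime hk1 hks
  have h0 : (0 : ℤ) ∈ hpValues p n k := ⟨j, hj1, hjsum, by simp [← hjsp]⟩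
  exact le_antisymm (csInf_le ⟨0, fun _ => nonneg_of_mem_hpValues hprime⟩ h0)
    (le_csInf ⟨0, h0⟩ fun _ => nonneg_of_mem_hpValues hprime)

end HpValues

theorem max_val_sub_hp (p : ℕ) (hprime : p.Prime) (n : ℕ) (hn : 1 ≤ n)
    (l : ℕ) (hl : l = Nat.log p (sp p n)) :
    IsGreatest {z : ℤ | ∃ k : ℕ, 1 ≤ k ∧ k ≤ n ∧
      z = (padicValNat p k : ℤ) - hp p n k} (l : ℤ) := by
  have := Fact.mk hprime
  have hpow_le : p ^ l ≤ sp p n := hl ▸ Nat.pow_log_le_self p (sp_pos_s7 hn).ne'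
  have hpow_pos : 1 ≤ p ^ l := Nat.one_le_pow _ _ hprime.pos
  refine ⟨⟨p ^ l, hpow_pos, hpow_le.trans (Nat.digit_sum_le p n), ?_⟩, ?_⟩
  · rw [padicValNat.prime_pow, hp_eq_zero_of_le_sp hprime hpow_pos hpow_le, sub_zero]
  · rintro _ ⟨k, hk1, hkn, rfl⟩
    obtain ⟨c, hc, hk⟩ := exists_hp_eq_natCast hprime hk1 hkn
    have hv := le_log_add_of_pow_le hprime.one_lt
      ((Nat.le_of_dvd hk1 pow_padicValNat_dvd).trans hk)
    rw [hc, hl]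
    omega
end

section
/- Let X_1,...,X_K be formal power series over ℚ in noncommuting variables, and suppose that for each i and each word v of length j ≤ n the denominator of the coefficient of v in X_i divides δ_j(X_i). Then for any word w of length n, the denominator of the coefficient of w in the product X_1···X_K divides lcm{ δ_{j_1}(X_1)···δ_{j_K}(X_K) : j_i ≥ 0, j_1+...+j_K = n }. -/
/-! Induct on `K`. The coefficient of `w` in `X₁ · (X₂ ⋯ X_K)` is a sum over the splittings
`w = v u` with `|v| = j`; the denominator of a sum divides the lcm of the denominators, and that
of a product divides the product of the denominators. So the term for `j` has denominator
dividing `δ₁(j)` times the lcm over `j₂ + ⋯ + j_K = n - j` of `δ₂(j₂) ⋯ δ_K(j_K)`, which divides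
the lcm over all `j₁ + ⋯ + j_K = n`. When there is no such tuple (`K = 1`, `j < n`) the term
vanishes. -/

/-- A formal power series in noncommuting variables from the alphabet `A` is represented by
its coefficient function `List A → ℚ` (a word is a `List A`).  `prodCoeff [X₁,…,X_K] w` is the
coefficient of the word `w` in the product `X₁ ⋯ X_K`: the sum over all factorizations
`w = v⁽¹⁾ ⋯ v⁽ᴷ⁾` of the products of the coefficients. -/
def prodCoeff {A : Type*} : List (List A → ℚ) → List A → ℚ
  | [], [] => 1
  | [], _ :: _ => 0
  | X :: Xs, w => ∑ i ∈ Finset.range (w.length + 1),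
      X (List.take i w) * prodCoeff Xs (List.drop i w)

namespace Finset

theorem lcm_mul_left_of_nonempty {ι α : Type*} [CommMonoidWithZero α]
    [StrongNormalizedGCDMonoid α] {s : Finset ι} (hs : s.Nonempty) (a : α) (f : ι → α) :
    (s.lcm fun x => a * f x) = normalize a * s.lcm f := by
  classical
  induction hs using Finset.Nonempty.cons_induction with
  | singleton x => simp
  | cons x s hx _ ih => rw [cons_eq_insert, lcm_insert, lcm_insert, ih, ← lcm_mul_left,
      lcm_eq_of_associated_right ((normalize_associated a).mul_right _)]

theorem Nat.lcm_antidiagonalTuple_comp_cons_dvd {α : Type*} [CommMonoidWithZero α]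
    [NormalizedGCDMonoid α] {K n i : ℕ} (hi : i ≤ n) (g : (Fin (K + 1) → ℕ) → α) :
    (antidiagonalTuple K (n - i)).lcm (fun j => g (Fin.cons i j)) ∣
      (antidiagonalTuple (K + 1) n).lcm g :=
  lcm_dvd fun j hj => dvd_lcm <| by
    rw [Nat.mem_antidiagonalTuple] at hj ⊢
    rw [Fin.sum_cons, hj, Nat.add_sub_cancel' hi]

end Finset

theorem prodCoeff_nil_of_ne_nil {A : Type*} {w : List A} (hw : w ≠ []) :
    prodCoeff [] w = 0 := by
  cases w with
  | nil => exact absurd rfl hw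
  | cons _ _ => rfl

theorem antidiagonalTuple_nonempty_of_prodCoeff_ofFn_ne_zero {A : Type*} {K : ℕ}
    {X : Fin K → List A → ℚ} {w : List A} (h : prodCoeff (List.ofFn X) w ≠ 0) :
    (Finset.Nat.antidiagonalTuple K w.length).Nonempty := by
  cases K with
  | zero =>
    have hw : w = [] := by
      by_contra hw
      exact h (by rw [List.ofFn_zero, prodCoeff_nil_of_ne_nil hw])
    exact ⟨![], by simp [hw]⟩
  | succ K =>
    exact ⟨Fin.cons w.length 0, by rw [Finset.Nat.mem_antidiagonalTuple, Fin.sum_cons]; simp⟩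

theorem den_coeff_prod_dvd (A : Type*) (K n : ℕ)
    (X : Fin K → (List A → ℚ)) (δ : Fin K → ℕ → ℕ)
    (hδ : ∀ i : Fin K, ∀ v : List A, v.length ≤ n → (X i v).den ∣ δ i v.length)
    (w : List A) (hw : w.length = n) :
    (prodCoeff (List.ofFn X) w).den ∣
      (Finset.Nat.antidiagonalTuple K n).lcm fun j => ∏ i, δ i (j i) := by
  induction K generalizing n w with
  | zero => cases w <;> simp [prodCoeff]
  | succ K ih =>
    rw [List.ofFn_succ, prodCoeff]
    refine (Finset.Rat.den_sum_dvd_lcm_den _ _).trans (Finset.lcm_dvd fun i hi => ?_)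
    have hin : i ≤ n := by rw [Finset.mem_range] at hi; omega
    set P := prodCoeff (List.ofFn fun k => X k.succ) (w.drop i)
    rcases eq_or_ne P 0 with hP | hP
    · simp [hP]
    have hX : (X 0 (w.take i)).den ∣ δ 0 i := by
      simpa [hw, hin] using hδ 0 (w.take i) (by simp [hw, hin])
    have hPden := ih (n - i) (fun k => X k.succ) (fun k => δ k.succ)
      (fun k v hv => hδ k.succ v (hv.trans (n.sub_le i))) (w.drop i) (by simp [hw])
    have hne : (Finset.Nat.antidiagonalTuple K (n - i)).Nonempty := by
      simpa [hw] using antidiagonalTuple_nonempty_of_prodCoeff_ofFn_ne_zero hP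
    calc (X 0 (w.take i) * P).den
        ∣ δ 0 i * (Finset.Nat.antidiagonalTuple K (n - i)).lcm fun j => ∏ k, δ k.succ (j k) :=
          (Rat.mul_den_dvd _ _).trans (mul_dvd_mul hX hPden)
      _ = (Finset.Nat.antidiagonalTuple K (n - i)).lcm
            fun j => ∏ k, δ k ((Fin.cons i j : Fin (K + 1) → ℕ) k) := by
          simp [Finset.lcm_mul_left_of_nonempty hne, Fin.prod_univ_succ]
      _ ∣ _ := Finset.Nat.lcm_antidiagonalTuple_comp_cons_dvd hin _
end

section
/- Let X_1,...,X_K be formal power series over ℚ in noncommuting variables with zero constant term, and suppose that for each i and each word v of length j with 1 ≤ j ≤ n the denominator of the coefficient of v in X_i divides δ_j(X_i). Then for any word w of length n, the denominator of the coefficient of w in X_1···X_K divides lcm{ δ_{j_1}(X_1)···δ_{j_K}(X_K) : j_i ≥ 1, j_1+...+j_K = n }. -/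
/-!
Induction on the number of factors, peeling off `X₁`: the coefficient of `w` in `X₁ ⋯ X_K` is
the sum over splittings `w = uv`, `u` nonempty, of `X₁(u)` times the coefficient of `v` in
`X₂ ⋯ X_K`. The induction carries a rational prefactor `r` with `r.den ∣ d`, so that peeling
off `X₁(u)` just moves it into the prefactor and multiplies `d` by `δ_{|u|}(X₁)`.
-/

theorem Rat.den_sum_dvd {ι : Type*} (s : Finset ι) (f : ι → ℚ) {N : ℕ}
    (h : ∀ i ∈ s, (f i).den ∣ N) : (∑ i ∈ s, f i).den ∣ N :=
  Finset.sum_induction f (fun r : ℚ => r.den ∣ N)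
    (fun a b ha hb => (Rat.add_den_dvd_lcm a b).trans (Nat.lcm_dvd ha hb)) (by simp) h

def positiveCompositions (K n : ℕ) : Finset (Fin K → ℕ) :=
  (Finset.Nat.antidiagonalTuple K n).filter fun j => ∀ i, 1 ≤ j i

theorem cons_mem_positiveCompositions {K n i : ℕ} {j : Fin K → ℕ} (hi : 1 ≤ i) (hin : i ≤ n)
    (hj : j ∈ positiveCompositions K (n - i)) :
    (Fin.cons i j : Fin (K + 1) → ℕ) ∈ positiveCompositions (K + 1) n := by
  simp only [positiveCompositions, Finset.mem_filter, Finset.Nat.mem_antidiagonalTuple] at hj ⊢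
  refine ⟨by rw [Fin.sum_cons, hj.1]; omega, Fin.cases hi hj.2⟩

theorem prodCoeff_cons {A : Type*} (X : List A → ℚ) (Xs : List (List A → ℚ)) (w : List A) :
    prodCoeff (X :: Xs) w =
      ∑ i ∈ Finset.range (w.length + 1), X (w.take i) * prodCoeff Xs (w.drop i) := by
  rw [prodCoeff]

theorem den_mul_prodCoeff_dvd {A : Type*} {n K : ℕ} (X : Fin K → List A → ℚ)
    (δ : Fin K → ℕ → ℕ) (hconst : ∀ i, X i [] = 0)
    (hδ : ∀ i v, 1 ≤ v.length → v.length ≤ n → (X i v).den ∣ δ i v.length)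
    (w : List A) (hw : w.length ≤ n) (r : ℚ) (d N : ℕ) (hr : r.den ∣ d)
    (hN : ∀ j ∈ positiveCompositions K w.length, d * ∏ i, δ i (j i) ∣ N) :
    (r * prodCoeff (List.ofFn X) w).den ∣ N := by
  induction K generalizing w r d with
  | zero =>
    cases w with
    | nil =>
      have hd : d ∣ N := by
        simpa using hN ![] (by simp [positiveCompositions, Finset.Nat.antidiagonalTuple])
      simpa [prodCoeff] using hr.trans hd
    | cons a t => simp [prodCoeff]
  | succ K ih =>
    rw [List.ofFn_succ, prodCoeff_cons, Finset.mul_sum]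
    refine Rat.den_sum_dvd _ _ fun i hi => ?_
    obtain rfl | hi1 := Nat.eq_zero_or_pos i
    · simp [hconst 0]
    have hiw : i ≤ w.length := Finset.mem_range_succ_iff.mp hi
    have htake : (w.take i).length = i := List.length_take_of_le hiw
    have hXden : (X 0 (w.take i)).den ∣ δ 0 i := by
      simpa [htake] using hδ 0 (w.take i) (by omega) (by omega)
    rw [← mul_assoc]
    refine ih (fun k => X k.succ) (fun k => δ k.succ) (fun k => hconst k.succ)
      (fun k => hδ k.succ) (w.drop i) (by rw [List.length_drop]; omega) _ (d * δ 0 i)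
      ((Rat.mul_den_dvd _ _).trans (mul_dvd_mul hr hXden)) fun j hj => ?_
    rw [List.length_drop] at hj
    simpa [Fin.prod_univ_succ, mul_assoc] using hN _ (cons_mem_positiveCompositions hi1 hiw hj)

theorem den_coeff_prod_dvd_of_no_const (A : Type*) (K n : ℕ)
    (X : Fin K → (List A → ℚ)) (δ : Fin K → ℕ → ℕ)
    (hconst : ∀ i : Fin K, X i [] = 0)
    (hδ : ∀ i : Fin K, ∀ v : List A, 1 ≤ v.length → v.length ≤ n →
      (X i v).den ∣ δ i v.length)
    (w : List A) (hw : w.length = n) :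
    (prodCoeff (List.ofFn X) w).den ∣
      ((Finset.Nat.antidiagonalTuple K n).filter fun j => ∀ i, 1 ≤ j i).lcm
        fun j => ∏ i, δ i (j i) := by
  subst hw
  simpa using den_mul_prodCoeff_dvd X δ hconst hδ w le_rfl 1 1 _ (by simp)
    fun j hj => by rw [one_mul]; exact Finset.dvd_lcm hj
end

section
/- Let p be prime and suppose h = 1/p + C where C is a rational number whose denominator is not divisible by p. If h = a/(p!·d) with d a positive integer not divisible by p and a an integer, then a ≡ −d (mod p). -/
/-!
Write `p! = p · (p-1)!` and `k = (p-1)! · d`. Then `a = k + C · p · k`, and `C · p · k` is an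
integer divisible by `p` because `p` does not divide the denominator of `C`. Hence `a ≡ k`, and
Wilson's theorem gives `k ≡ -d (mod p)`.
-/

open Nat

theorem Int.prime_dvd_of_rat_mul_eq {p : ℕ} (hp : p.Prime) {q : ℚ} (hq : ¬ p ∣ q.den)
    {m n : ℤ} (h : q * (p * m) = n) : (p : ℤ) ∣ n := by
  have hcleared : n * q.den = q.num * (p * m) := by
    have : (n : ℚ) * q.den = q.num * (p * m) := by
      rw [← h, ← Rat.mul_den_eq_num]; ring
    exact_mod_cast this
  have hdvd : (p : ℤ) ∣ n * q.den := hcleared ▸ dvd_mul_of_dvd_right (dvd_mul_right _ m)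
  refine ((Nat.prime_iff_prime_int.mp hp).dvd_or_dvd hdvd).resolve_right ?_
  exact_mod_cast hq

theorem Int.factorial_pred_modEq_neg_one {p : ℕ} (hp : p.Prime) :
    ((p - 1)! : ℤ) ≡ -1 [ZMOD p] := by
  have := Fact.mk hp
  rw [← ZMod.intCast_eq_intCast_iff]
  push_cast
  exact ZMod.wilsons_lemma p

theorem numerator_mod_p_general (p : ℕ) (hp : p.Prime) (C : ℚ) (hC : ¬ p ∣ C.den)
    (d : ℕ) (a : ℤ)
    (ha : ((1 : ℚ) / p + C) * ((p.factorial : ℚ) * d) = (a : ℚ)) :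
    a ≡ -(d : ℤ) [ZMOD p] := by
  set k : ℤ := ((p - 1)! : ℤ) * d
  have hp0 : (p : ℚ) ≠ 0 := Nat.cast_ne_zero.mpr hp.ne_zero
  have hfac : (p ! : ℚ) = p * (p - 1)! := mod_cast (Nat.mul_factorial_pred hp.ne_zero).symm
  have hsplit : C * (p * k) = ((a - k : ℤ) : ℚ) := by
    rw [Int.cast_sub, ← ha, hfac]; push_cast [k]; field_simp; ring
  calc a ≡ k [ZMOD p] := (Int.modEq_iff_dvd.mpr (Int.prime_dvd_of_rat_mul_eq hp hC hsplit)).symm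
    _ ≡ -1 * d [ZMOD p] := (Int.factorial_pred_modEq_neg_one hp).mul_right _
    _ = -d := by ring

theorem numerator_mod_p (p : ℕ) (hp : p.Prime) (C : ℚ) (hC : ¬ p ∣ C.den)
    (d : ℕ) (hd : 0 < d) (hpd : ¬ p ∣ d) (a : ℤ)
    (ha : ((1 : ℚ) / p + C) * ((p.factorial : ℚ) * d) = (a : ℚ)) :
    a ≡ -(d : ℤ) [ZMOD p] :=
  numerator_mod_p_general p hp C hC d a ha
end

section
/- Let p ≥ 3 be an odd prime and suppose h = 1/(2p) + C where C is a rational number whose denominator is not divisible by p. If h = a/((p+1)!·d) with d a positive integer not divisible by p and a an integer, then a ≡ ((p−1)/2)·d (mod p). -/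
/-! For odd `p` we have `(p + 1)! = 2p · M` with `M = (p + 1)/2 · (p - 1)!`, so
`a = M d + C (p + 1)! d`. The second summand is an integer divisible by `p`, because the factor
`p` of `(p + 1)!` is not cancelled by the denominator of `C`. By Wilson's theorem
`M ≡ -(p + 1)/2 ≡ (p - 1)/2 (mod p)`. -/

open scoped Nat

theorem Rat.dvd_of_mul_eq_intCast {q : ℚ} {k m b : ℤ} (hk : IsCoprime k q.den) (hkm : k ∣ m)
    (h : q * m = b) : k ∣ b := by
  have hint : b * q.den = q.num * m := by
    have : (b : ℚ) * q.den = q.num * m := by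
      rw [← h, ← Rat.mul_den_eq_num]
      ring
    exact_mod_cast this
  exact hk.dvd_of_dvd_mul_right (hint ▸ dvd_mul_of_dvd_right hkm _)

theorem Nat.factorial_succ_eq_two_mul_mul_of_odd {p : ℕ} (hp : Odd p) :
    (p + 1)! = 2 * p * ((p + 1) / 2 * (p - 1)!) := by
  obtain ⟨k, rfl⟩ := hp
  rw [Nat.factorial_succ, ← Nat.mul_factorial_pred (by omega),
    show (2 * k + 1 + 1) / 2 = k + 1 by omega]
  ring

theorem Int.half_succ_mul_factorial_pred_modEq {p : ℕ} (hp : p.Prime) (hp2 : p ≠ 2) :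
    (((p + 1) / 2 * (p - 1)! : ℕ) : ℤ) ≡ (((p - 1) / 2 : ℕ) : ℤ) [ZMOD p] := by
  have := Fact.mk hp
  have hsum : (p + 1) / 2 + (p - 1) / 2 = p := by
    obtain ⟨k, rfl⟩ := hp.odd_of_ne_two hp2
    omega
  rw [← ZMod.intCast_eq_intCast_iff, Int.cast_natCast, Int.cast_natCast, Nat.cast_mul,
    ZMod.wilsons_lemma, mul_neg_one, neg_eq_iff_add_eq_zero, ← Nat.cast_add, hsum,
    ZMod.natCast_self]

theorem numerator_mod_p_succ_general (p : ℕ) (hp : p.Prime) (hodd : 3 ≤ p)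
    (C : ℚ) (hC : ¬ p ∣ C.den)
    (d : ℕ) (a : ℤ)
    (ha : ((1 : ℚ) / (2 * p) + C) * (((p + 1).factorial : ℚ) * d) = (a : ℚ)) :
    a ≡ (((p - 1) / 2 : ℕ) : ℤ) * d [ZMOD p] := by
  set M := (p + 1) / 2 * (p - 1)!
  have hfac : (p + 1)! = 2 * p * M :=
    Nat.factorial_succ_eq_two_mul_mul_of_odd (hp.odd_of_ne_two (by omega))
  have hrest : C * (((p + 1)! * d : ℕ) : ℤ) = ((a - M * d : ℤ) : ℚ) := by
    have hp0 : (p : ℚ) ≠ 0 := by exact_mod_cast hp.ne_zero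
    push_cast
    rw [← ha, hfac]
    push_cast
    field_simp
    ring
  have hpdvd : (p : ℤ) ∣ a - M * d := by
    refine Rat.dvd_of_mul_eq_intCast (Nat.Coprime.isCoprime ?_) ?_ hrest
    · exact hp.coprime_iff_not_dvd.mpr hC
    · exact Int.natCast_dvd_natCast.mpr
        (dvd_mul_of_dvd_left (Nat.dvd_factorial hp.pos (by omega)) _)
  calc a ≡ M * d [ZMOD p] := (Int.modEq_iff_dvd.mpr hpdvd).symm
    _ ≡ (((p - 1) / 2 : ℕ) : ℤ) * d [ZMOD p] :=
      (Int.half_succ_mul_factorial_pred_modEq hp (by omega)).mul_right _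

theorem numerator_mod_p_succ (p : ℕ) (hp : p.Prime) (hodd : 3 ≤ p)
    (C : ℚ) (hC : ¬ p ∣ C.den)
    (d : ℕ) (hd : 0 < d) (hpd : ¬ p ∣ d) (a : ℤ)
    (ha : ((1 : ℚ) / (2 * p) + C) * (((p + 1).factorial : ℚ) * d) = (a : ℚ)) :
    a ≡ (((p - 1) / 2 : ℕ) : ℤ) * d [ZMOD p] :=
  numerator_mod_p_succ_general p hp hodd C hC d a ha
end

section
/- Let p be prime, n ≥ 1, and l = max{t : p^t ≤ s_p(n)}. For every k with 1 ≤ k ≤ n and every composition j_1+...+j_k = n into positive parts, v_p(k · j_1!···j_k!) ≤ v_p(n!) + l. -/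
lemma sp_pos_s18 (p m : ℕ) (hm : m ≠ 0) : 1 ≤ sp p m := by
  by_contra h
  have hsum : (Nat.digits p m).sum = 0 := by unfold sp at h; omega
  have hne : Nat.digits p m ≠ [] := Nat.digits_ne_nil_iff_ne_zero.mpr hm
  exact Nat.getLast_digit_ne_zero p hm
    (List.sum_eq_zero_iff.mp hsum _ (List.getLast_mem hne))

lemma log_add_mul_le (p s : ℕ) (hp : 2 ≤ p) (hs : 1 ≤ s) (D : ℕ) :
    Nat.log p (s + (p - 1) * D) ≤ Nat.log p s + D := by
  induction D with
  | zero => simp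
  | succ D ih =>
    obtain ⟨q, rfl⟩ : ∃ q, p = q + 2 := ⟨p - 2, by omega⟩
    have h1 : s + (q + 2 - 1) * (D + 1) ≤ (s + (q + 2 - 1) * D) * (q + 2) := by
      have : q + 2 - 1 = q + 1 := by omega
      rw [this] at *
      nlinarith [Nat.mul_le_mul_right (q + 1) hs, Nat.zero_le ((q + 1) * D * (q + 1))]
    calc Nat.log (q + 2) (s + (q + 2 - 1) * (D + 1))
        ≤ Nat.log (q + 2) ((s + (q + 2 - 1) * D) * (q + 2)) := Nat.log_mono_right h1
      _ = Nat.log (q + 2) (s + (q + 2 - 1) * D) + 1 := Nat.log_mul_base hp (by omega)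
      _ ≤ Nat.log (q + 2) s + (D + 1) := by omega

theorem padicValNat_composition_le (p : ℕ) (hp : p.Prime) (n : ℕ) (hn : 1 ≤ n)
    (l : ℕ) (hl : l = Nat.log p (sp p n))
    (k : ℕ) (hk1 : 1 ≤ k) (hk2 : k ≤ n)
    (j : Fin k → ℕ) (hpos : ∀ i, 1 ≤ j i) (hsum : ∑ i, j i = n) :
    padicValNat p (k * ∏ i, Nat.factorial (j i)) ≤ padicValNat p n.factorial + l := by
  haveI : Fact p.Prime := ⟨hp⟩
  have hp2 : 2 ≤ p := hp.two_le
  have hfacne : ∀ i : Fin k, Nat.factorial (j i) ≠ 0 := fun i => (Nat.factorial_pos _).ne'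
  have hprodne : (∏ i, Nat.factorial (j i)) ≠ 0 :=
    Finset.prod_ne_zero_iff.mpr fun i _ => hfacne i
  have hmul : padicValNat p (k * ∏ i, Nat.factorial (j i)) =
      padicValNat p k + padicValNat p (∏ i, Nat.factorial (j i)) :=
    padicValNat.mul (by omega) hprodne
  have hprodval : padicValNat p (∏ i, Nat.factorial (j i)) =
      ∑ i, padicValNat p (Nat.factorial (j i)) := by
    rw [← Nat.factorization_def _ hp, Nat.factorization_prod fun i _ => hfacne i,
      Finsupp.finset_sum_apply]
    exact Finset.sum_congr rfl fun i _ => Nat.factorization_def _ hp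
  set V : ℕ := ∑ i, padicValNat p (Nat.factorial (j i)) with hV
  set S : ℕ := ∑ i, sp p (j i) with hS
  have hleg : ∀ m : ℕ, (p - 1) * padicValNat p (Nat.factorial m) + sp p m = m := by
    intro m
    have h1 := sub_one_mul_padicValNat_factorial (p := p) m
    have hle : sp p m ≤ m := Nat.digit_sum_le p m
    unfold sp; unfold sp at hle; omega
  have hlegsum : (p - 1) * V + S = n := by
    rw [hV, hS, Finset.mul_sum, ← Finset.sum_add_distrib, ← hsum]
    exact Finset.sum_congr rfl fun i _ => hleg (j i)
  have hlegn : (p - 1) * padicValNat p (Nat.factorial n) + sp p n = n := hleg n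
  have hdvd : (∏ i, Nat.factorial (j i)) ∣ Nat.factorial n := by
    rw [← hsum]; exact Nat.prod_factorial_dvd_factorial_sum _ _
  have hVle : V ≤ padicValNat p (Nat.factorial n) := by
    rw [← hprodval]
    exact (padicValNat_dvd_iff_le (Nat.factorial_pos n).ne').mp
      (pow_padicValNat_dvd.trans hdvd)
  set D : ℕ := padicValNat p (Nat.factorial n) - V with hD
  have hDadd : (p - 1) * V + (p - 1) * D = (p - 1) * padicValNat p (Nat.factorial n) := by
    rw [← Nat.mul_add]; congr 1; omega
  have hSs : S = sp p n + (p - 1) * D := by omega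
  have hkS : k ≤ S := by
    rw [hS]
    calc k = ∑ _i : Fin k, 1 := by simp
      _ ≤ ∑ i, sp p (j i) := Finset.sum_le_sum fun i _ =>
          sp_pos_s18 p (j i) (by have := hpos i; omega)
  have hspn : 1 ≤ sp p n := sp_pos_s18 p n (by omega)
  have hvk : padicValNat p k ≤ Nat.log p S :=
    (padicValNat_le_nat_log k).trans (Nat.log_mono_right hkS)
  have hlog : Nat.log p S ≤ l + D := by
    rw [hSs, hl]; exact log_add_mul_le p (sp p n) hp2 hspn D
  rw [hmul, hprodval]
  have hDV : D + V = padicValNat p n.factorial := by omega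
  omega
end
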